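/- arXiv:0808.2524 — 4 statements merged into one kernel-verified Lean document; each statement's English description precedes it below -/
import Mathlib

section
/- For self-adjoint operators a, b, equality tr((ab)^2) = tr(a^2 b^2) holds if and only if ab = ba. -/
/-! For `c = a * b - b * a` the trace of `c ^ 2` expands, by cyclicity of the trace, to
`2 tr((ab)²) - 2 tr(a²b²)`. When `a` and `b` are Hermitian, `c` is skew-Hermitian, so
`tr(cᴴ c) = -tr(c ^ 2) = 2 (tr(a²b²) - tr((ab)²))`; since `tr(cᴴ c)` is the squared Frobenius
norm of `c`, it vanishes exactly when `c = 0`. -/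

open scoped ComplexOrder

namespace Matrix

variable {n R : Type*} [Fintype n] [DecidableEq n]

theorem trace_commutator_sq [CommRing R] (a b : Matrix n n R) :
    trace ((a * b - b * a) ^ 2) = 2 * trace ((a * b) ^ 2) - 2 * trace (a ^ 2 * b ^ 2) := by
  have h_baab : trace (b * a * (a * b)) = trace (a ^ 2 * b ^ 2) := by
    rw [mul_assoc, trace_mul_comm b, sq, sq]; simp only [mul_assoc]
  have h_abba : trace (a * b * (b * a)) = trace (a ^ 2 * b ^ 2) := by
    rw [trace_mul_comm, h_baab]
  have h_baba : trace (b * a * (b * a)) = trace ((a * b) ^ 2) := by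
    rw [mul_assoc, trace_mul_comm b, sq]; simp only [mul_assoc]
  rw [sq (a * b - b * a), sub_mul, mul_sub, mul_sub, trace_sub, trace_sub, trace_sub,
    h_abba, h_baab, h_baba, ← sq]
  ring

theorem IsHermitian.trace_conjTranspose_commutator_mul_self [CommRing R] [StarRing R]
    {a b : Matrix n n R} (ha : a.IsHermitian) (hb : b.IsHermitian) :
    trace ((a * b - b * a)ᴴ * (a * b - b * a)) =
      2 * (trace (a ^ 2 * b ^ 2) - trace ((a * b) ^ 2)) := by
  have h_skew : (a * b - b * a)ᴴ = -(a * b - b * a) := by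
    rw [conjTranspose_sub, conjTranspose_mul, conjTranspose_mul, ha.eq, hb.eq, neg_sub]
  rw [h_skew, neg_mul, trace_neg, ← sq, trace_commutator_sq]
  ring

end Matrix

/-- For Hermitian matrices `a`, `b`, equality `tr((ab)^2) = tr(a^2 b^2)` holds
iff `a` and `b` commute. -/
theorem trace_sq_mul_eq_iff_commute {n : ℕ} (a b : Matrix (Fin n) (Fin n) ℂ)
    (ha : a.IsHermitian) (hb : b.IsHermitian) :
    Matrix.trace ((a * b) ^ 2) = Matrix.trace (a ^ 2 * b ^ 2) ↔ a * b = b * a := by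
  rw [eq_comm, ← sub_eq_zero, ← mul_eq_zero_iff_left (two_ne_zero' ℂ),
    ← ha.trace_conjTranspose_commutator_mul_self hb,
    Matrix.trace_conjTranspose_mul_self_eq_zero_iff, sub_eq_zero]
end

section
/- The differential of the matrix exponential is metric-expanding: for Hermitian matrices x and y, ‖e^{-x/2} (D exp)_x(y) e^{-x/2}‖_F ≥ ‖y‖_F, where (D exp)_x(y) = d/dt|_{t=0} exp(x + ty). -/
open Matrix
noncomputable section

/-- matrix exponential -/
def mexp {n : ℕ} (x : Matrix (Fin n) (Fin n) ℂ) : Matrix (Fin n) (Fin n) ℂ :=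
  NormedSpace.exp x

/-- logarithm of a positive definite (Hermitian) matrix, via spectral decomposition -/
def mlog {n : ℕ} (p : Matrix (Fin n) (Fin n) ℂ) : Matrix (Fin n) (Fin n) ℂ :=
  if h : p.IsHermitian then
    (h.eigenvectorUnitary : Matrix (Fin n) (Fin n) ℂ) *
      Matrix.diagonal (fun i => (Real.log (h.eigenvalues i) : ℂ)) *
      (star (h.eigenvectorUnitary : Matrix (Fin n) (Fin n) ℂ))
  else 0

/-- Frobenius norm -/
def frob {n : ℕ} (a : Matrix (Fin n) (Fin n) ℂ) : ℝ :=
  Real.sqrt (Matrix.trace (aᴴ * a)).re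

/-- p^{1/2} for positive definite p -/
def psqrt {n : ℕ} (p : Matrix (Fin n) (Fin n) ℂ) : Matrix (Fin n) (Fin n) ℂ :=
  mexp ((1/2 : ℝ) • mlog p)

/-- geodesic distance on positive definite matrices -/
def gdist {n : ℕ} (p q : Matrix (Fin n) (Fin n) ℂ) : ℝ :=
  frob (mlog ((psqrt p)⁻¹ * q * (psqrt p)⁻¹))

attribute [local instance] Matrix.frobeniusNormedAddCommGroup Matrix.frobeniusNormedSpace

/-!
Diagonalize `x = U Λ U*` with `Λ = diag λ`. In the eigenbasis the derivative of `exp` is a Schur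
product (Daleckii–Krein): `U* D U = [φ(λ_a, λ_b)] ⊙ U* y U`, where `φ = expDivDiff` is the
divided difference of `Real.exp`. Its `(a, b)` entry is read off from `exp (Λ + t E_ab)`, which
is explicit: when `λ_a = λ_b` the two summands commute, and otherwise `Λ + t E_ab` is conjugate
to `Λ` by the shear `1 + s E_ab`. Conjugating by `e^{-x/2}` multiplies the `(a, b)` entry by
`e^{-(λ_a + λ_b)/2}`, and `e^{-(p+q)/2} φ(p, q) = sinh c / c ≥ 1` for `c = (p - q)/2`. So no
entry of `U* y U` shrinks, and the Frobenius norm is unitarily invariant.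
-/

open NormedSpace

def expDivDiff (p q : ℝ) : ℝ :=
  if p = q then Real.exp p else (Real.exp p - Real.exp q) / (p - q)

lemma Real.one_le_sinh_div_self {c : ℝ} (hc : c ≠ 0) : 1 ≤ Real.sinh c / c := by
  rcases hc.lt_or_gt with hc | hc
  · rw [one_le_div_of_neg hc]
    exact Real.sinh_le_self_iff.mpr hc.le
  · rw [one_le_div hc]
    exact Real.self_le_sinh_iff.mpr hc.le

lemma one_le_exp_mul_expDivDiff (p q : ℝ) :
    1 ≤ Real.exp (-(p + q) / 2) * expDivDiff p q := by
  unfold expDivDiff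
  split_ifs with hpq
  · rw [hpq, ← Real.exp_add, show -(q + q) / 2 + q = 0 by ring, Real.exp_zero]
  · set c := (p - q) / 2
    have hc : c ≠ 0 := div_ne_zero (sub_ne_zero.mpr hpq) two_ne_zero
    have hsinh : Real.exp (-(p + q) / 2) * ((Real.exp p - Real.exp q) / (p - q))
        = Real.sinh c / c := by
      rw [Real.sinh_eq, show p - q = 2 * c by ring, mul_div_assoc', mul_sub, ← Real.exp_add,
        ← Real.exp_add, show -(p + q) / 2 + p = c by ring, show -(p + q) / 2 + q = -c by ring,
        div_div]
    exact hsinh ▸ Real.one_le_sinh_div_self hc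

lemma unitary_conj_mul_conj {R : Type*} [Monoid R] [StarMul R] (U : unitary R) (A B : R) :
    (U : R) * A * star (U : R) * (U * B * star (U : R)) = U * (A * B) * star (U : R) := by
  simp only [mul_assoc]
  rw [← mul_assoc (star _) U.1, Unitary.star_mul_self_of_mem U.2, one_mul]

lemma unitary_conj_star_conj {R : Type*} [Monoid R] [StarMul R] (U : unitary R) (A : R) :
    (U : R) * (star (U : R) * A * U) * star (U : R) = A := by
  simp only [← mul_assoc, Unitary.mul_star_self_of_mem U.2, one_mul]
  rw [mul_assoc, Unitary.mul_star_self_of_mem U.2, mul_one]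

lemma hasDerivAt_exp_add_smul_of_commute {𝔸 : Type*} [NormedRing 𝔸] [NormedAlgebra ℚ 𝔸]
    [NormedAlgebra ℝ 𝔸] [CompleteSpace 𝔸] {A E : 𝔸} (h : Commute A E) :
    HasDerivAt (fun t : ℝ => exp (A + t • E)) (exp A * E) 0 := by
  have hsplit : (fun t : ℝ => exp (A + t • E)) = fun t => exp A * exp (t • E) :=
    funext fun t => exp_add_of_commute (h.smul_right t)
  simpa [hsplit] using (hasDerivAt_exp_smul_const (𝕂 := ℝ) E 0).const_mul (exp A)

namespace Matrix

lemma single_sub {m n α : Type*} [DecidableEq m] [DecidableEq n] [AddCommGroup α] (a : m) (b : n)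
    (c c' : α) : single a b (c - c') = single a b c - single a b c' :=
  map_sub (singleAddMonoidHom a b) c c'

lemma re_trace_conjTranspose_mul_self {m n : Type*} [Fintype m] [Fintype n] (A : Matrix m n ℂ) :
    (Aᴴ * A).trace.re = ∑ i, ∑ j, ‖A i j‖ ^ 2 := by
  simp only [trace, diag_apply, mul_apply, conjTranspose_apply, Complex.re_sum]
  rw [Finset.sum_comm]
  simp [Complex.sq_norm, Complex.normSq_apply, Complex.mul_re]

variable {ι : Type*} [Fintype ι] [DecidableEq ι]

lemma diagonal_mul_single {α : Type*} [NonUnitalNonAssocSemiring α] (d : ι → α) (a b : ι)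
    (c : α) : diagonal d * single a b c = single a b (d a * c) := by
  ext i j
  rw [diagonal_mul, single_apply, single_apply]
  split_ifs with h
  · rw [h.1]
  · exact mul_zero _

lemma single_mul_diagonal {α : Type*} [NonUnitalNonAssocSemiring α] (d : ι → α) (a b : ι)
    (c : α) : single a b c * diagonal d = single a b (c * d b) := by
  ext i j
  rw [mul_diagonal, single_apply, single_apply]
  split_ifs with h
  · rw [h.2]
  · exact zero_mul _

lemma diagonal_mul_hadamard_mul_diagonal {α : Type*} [CommSemiring α] (e : ι → α)
    (A B : Matrix ι ι α) :
    diagonal e * (A ⊙ B) * diagonal e = (of fun a b => e a * A a b * e b) ⊙ B := by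
  ext a b
  simp only [mul_diagonal, diagonal_mul, hadamard_apply, of_apply]
  ring

lemma exp_diagonal_mul_single (d : ι → ℂ) (a b : ι) (c : ℂ) :
    exp (diagonal d) * single a b c = single a b (Complex.exp (d a) * c) := by
  rw [exp_diagonal, diagonal_mul_single, Pi.coe_exp, ← Complex.exp_eq_exp_ℂ]

lemma exp_diagonal_add_single_of_ne {d : ι → ℂ} {a b : ι} (h : d a ≠ d b) (c : ℂ) :
    exp (diagonal d + single a b c) = exp (diagonal d) +
      single a b ((Complex.exp (d a) - Complex.exp (d b)) / (d a - d b) * c) := by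
  have hab : a ≠ b := fun hab => h (congrArg d hab)
  have hd : d b - d a ≠ 0 := sub_ne_zero.mpr h.symm
  obtain ⟨E, hE⟩ : ∃ E, E = single a b (c / (d b - d a)) := ⟨_, rfl⟩
  have hsq : E * E = 0 := hE ▸ single_mul_single_of_ne _ _ _ _ hab.symm _
  have h1 : (1 + E) * (1 - E) = 1 := by
    rw [mul_sub, mul_one, add_mul, one_mul, hsq, add_zero, add_sub_cancel_right]
  have h2 : (1 - E) * (1 + E) = 1 := by
    rw [mul_add, mul_one, sub_mul, one_mul, hsq, sub_zero, sub_add_cancel]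
  have hshear : diagonal d + single a b c = (1 + E) * diagonal d * (1 + E)⁻¹ := by
    rw [inv_eq_right_inv h1, hE]
    simp only [mul_sub, add_mul, one_mul, mul_one, diagonal_mul_single, single_mul_diagonal]
    rw [single_mul_single_of_ne _ _ _ _ hab.symm, add_zero, add_sub_assoc, ← single_sub]
    congr 2
    field_simp
  have hunit : IsUnit (1 + E) := ⟨⟨_, _, h1, h2⟩, rfl⟩
  rw [hshear, exp_conj _ _ hunit, inv_eq_right_inv h1, exp_diagonal, hE]
  simp only [mul_sub, add_mul, one_mul, mul_one, diagonal_mul_single, single_mul_diagonal]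
  rw [single_mul_single_of_ne _ _ _ _ hab.symm, add_zero, add_sub_assoc, ← single_sub]
  congr 2
  simp only [Pi.coe_exp, ← Complex.exp_eq_exp_ℂ]
  field_simp
  ring

lemma exp_unitary_conj (U : unitary (Matrix ι ι ℂ)) (A : Matrix ι ι ℂ) :
    exp ((U : Matrix ι ι ℂ) * A * star (U : Matrix ι ι ℂ)) =
      U * exp A * star (U : Matrix ι ι ℂ) :=
  exp_units_conj (Unitary.toUnits U) A

namespace IsHermitian

variable {x : Matrix ι ι ℂ} (hx : x.IsHermitian)

lemma eq_conj_diagonal : x = hx.eigenvectorUnitary *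
    diagonal (fun i => (hx.eigenvalues i : ℂ)) * star (hx.eigenvectorUnitary : Matrix ι ι ℂ) := by
  conv_lhs => rw [hx.spectral_theorem, Unitary.conjStarAlgAut_apply]
  rfl

lemma exp_smul (r : ℝ) : NormedSpace.exp (r • x) = hx.eigenvectorUnitary *
    diagonal (fun i => (Real.exp (r * hx.eigenvalues i) : ℂ)) *
    star (hx.eigenvectorUnitary : Matrix ι ι ℂ) := by
  conv_lhs => rw [hx.eq_conj_diagonal, ← smul_mul_assoc, ← mul_smul_comm, ← diagonal_smul,
    exp_unitary_conj, exp_diagonal]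
  congr 3
  ext i
  simp [Pi.coe_exp, ← Complex.exp_eq_exp_ℂ]

end IsHermitian

section Derivative

attribute [local instance] Matrix.frobeniusNormedRing Matrix.frobeniusNormedAlgebra

lemma hasDerivAt_exp_diagonal_add_smul_single (d : ι → ℝ) (a b : ι) :
    HasDerivAt (fun t : ℝ => exp (diagonal (fun i => (d i : ℂ)) + t • single a b 1))
      (single a b (expDivDiff (d a) (d b) : ℂ)) 0 := by
  by_cases h : d a = d b
  · have hcomm : Commute (diagonal fun i => (d i : ℂ)) (single a b 1) := by
      rw [Commute, SemiconjBy, diagonal_mul_single, single_mul_diagonal, h]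
      simp
    refine (hasDerivAt_exp_add_smul_of_commute hcomm).congr_deriv ?_
    refine (exp_diagonal_mul_single _ a b 1).trans ?_
    rw [expDivDiff, if_pos h, Complex.ofReal_exp, mul_one]
  · have hline (t : ℝ) : exp (diagonal (fun i => (d i : ℂ)) + t • single a b 1) =
        exp (diagonal (fun i => (d i : ℂ))) + t • single a b (expDivDiff (d a) (d b) : ℂ) := by
      rw [smul_single, smul_single, exp_diagonal_add_single_of_ne (by exact_mod_cast h),
        expDivDiff, if_neg h]
      push_cast
      simp [Complex.real_smul, mul_comm]
    simp_rw [hline]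
    exact ((hasDerivAt_id (0 : ℝ)).smul_const _).const_add _ |>.congr_deriv (one_smul _ _)

lemma hasDerivAt_exp_diagonal_add_smul (d : ι → ℝ) (w : Matrix ι ι ℂ) :
    HasDerivAt (fun t : ℝ => exp (diagonal (fun i => (d i : ℂ)) + t • w))
      (of (fun a b => (expDivDiff (d a) (d b) : ℂ)) ⊙ w) 0 := by
  set Λ := diagonal (fun i => (d i : ℂ))
  obtain ⟨L, hL⟩ : ∃ L : Matrix ι ι ℂ →L[ℂ] Matrix ι ι ℂ, HasFDerivAt exp L Λ :=
    ⟨_, (exp_analytic (𝕂 := ℂ) Λ).differentiableAt.hasFDerivAt⟩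
  have hline (v : Matrix ι ι ℂ) : HasDerivAt (fun t : ℝ => exp (Λ + t • v)) (L v) 0 := by
    have := (hL.restrictScalars ℝ).comp_hasDerivAt_of_eq (0 : ℝ)
      (((hasDerivAt_id (0 : ℝ)).smul_const v).const_add Λ) (by simp)
    exact this.congr_deriv (by rw [one_smul]; rfl)
  have hsingle (a b : ι) : L (single a b 1) = single a b (expDivDiff (d a) (d b) : ℂ) :=
    (hline _).unique (hasDerivAt_exp_diagonal_add_smul_single d a b)
  have hw : w = ∑ a, ∑ b, w a b • single a b 1 := by
    simp_rw [smul_single, smul_eq_mul, mul_one]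
    exact matrix_eq_sum_single w
  refine (hline w).congr_deriv ?_
  conv_lhs => rw [hw]
  simp_rw [map_sum, map_smul, hsingle, smul_single]
  rw [sum_sum_single]
  ext a b
  simp [mul_comm]

lemma IsHermitian.hasDerivAt_exp_add_smul {x : Matrix ι ι ℂ} (hx : x.IsHermitian)
    (y : Matrix ι ι ℂ) :
    HasDerivAt (fun t : ℝ => NormedSpace.exp (x + t • y))
      (hx.eigenvectorUnitary *
        (of (fun a b => (expDivDiff (hx.eigenvalues a) (hx.eigenvalues b) : ℂ)) ⊙
          (star (hx.eigenvectorUnitary : Matrix ι ι ℂ) * y * hx.eigenvectorUnitary)) *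
        star (hx.eigenvectorUnitary : Matrix ι ι ℂ)) 0 := by
  set U := hx.eigenvectorUnitary
  have hconj (t : ℝ) : x + t • y = U * (diagonal (fun i => (hx.eigenvalues i : ℂ)) +
      t • (star (U : Matrix ι ι ℂ) * y * U)) * star (U : Matrix ι ι ℂ) := by
    rw [mul_add, add_mul, mul_smul_comm, smul_mul_assoc, unitary_conj_star_conj,
      ← hx.eq_conj_diagonal]
  simp_rw [hconj, exp_unitary_conj]
  exact ((hasDerivAt_exp_diagonal_add_smul _ _).const_mul _).mul_const _

end Derivative

end Matrix

section Frobenius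

variable {n : ℕ}

lemma frob_unitary_conj (U : unitary (Matrix (Fin n) (Fin n) ℂ)) (A : Matrix (Fin n) (Fin n) ℂ) :
    frob ((U : Matrix (Fin n) (Fin n) ℂ) * A * star (U : Matrix (Fin n) (Fin n) ℂ)) = frob A := by
  have hU := Unitary.star_mul_self_of_mem U.2
  have hprod : ((U : Matrix (Fin n) (Fin n) ℂ) * A * star (U : Matrix (Fin n) (Fin n) ℂ))ᴴ *
      (U * A * star (U : Matrix (Fin n) (Fin n) ℂ)) =
        U * (Aᴴ * A) * star (U : Matrix (Fin n) (Fin n) ℂ) := by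
    simp only [← star_eq_conjTranspose, star_mul, star_star, mul_assoc]
    rw [← mul_assoc (star _) U.1, hU, one_mul]
  rw [frob, frob, hprod, trace_mul_cycle, hU, one_mul]

lemma frob_le_frob_hadamard {g : Matrix (Fin n) (Fin n) ℂ} (hg : ∀ a b, 1 ≤ ‖g a b‖)
    (w : Matrix (Fin n) (Fin n) ℂ) : frob w ≤ frob (g ⊙ w) := by
  rw [frob, frob, re_trace_conjTranspose_mul_self, re_trace_conjTranspose_mul_self]
  gcongr with a _ b _
  rw [hadamard_apply, norm_mul]
  exact le_mul_of_one_le_left (norm_nonneg _) (hg a b)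

end Frobenius

theorem dexp_expansive_general {n : ℕ} (x y D : Matrix (Fin n) (Fin n) ℂ)
    (hx : x.IsHermitian)
    (hD : HasDerivAt (fun t : ℝ => NormedSpace.exp (x + t • y)) D 0) :
    frob y ≤ frob (mexp (-((1/2 : ℝ) • x)) * D * mexp (-((1/2 : ℝ) • x))) := by
  set U := hx.eigenvectorUnitary
  set d := hx.eigenvalues
  set w := star (U : Matrix (Fin n) (Fin n) ℂ) * y * U
  set G : Matrix (Fin n) (Fin n) ℂ := of fun a b =>
    (Real.exp (-(1/2) * d a) : ℂ) * expDivDiff (d a) (d b) * Real.exp (-(1/2) * d b)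
  have hG (a b : Fin n) : 1 ≤ ‖G a b‖ := by
    simp only [G, of_apply]
    rw [← Complex.ofReal_mul, ← Complex.ofReal_mul, Complex.norm_real, Real.norm_eq_abs,
      mul_right_comm, ← Real.exp_add, show -(1/2) * d a + -(1/2) * d b = -(d a + d b) / 2 by ring]
    exact (one_le_exp_mul_expDivDiff _ _).trans (le_abs_self _)
  have hconj : mexp (-((1/2 : ℝ) • x)) * D * mexp (-((1/2 : ℝ) • x)) =
      U * (G ⊙ w) * star (U : Matrix (Fin n) (Fin n) ℂ) := by
    rw [mexp, ← neg_smul, hx.exp_smul, hD.unique (hx.hasDerivAt_exp_add_smul y),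
      unitary_conj_mul_conj, unitary_conj_mul_conj, diagonal_mul_hadamard_mul_diagonal]
    rfl
  calc frob y = frob w := by rw [← frob_unitary_conj U w, unitary_conj_star_conj]
    _ ≤ frob (G ⊙ w) := frob_le_frob_hadamard hG w
    _ = _ := by rw [hconj, frob_unitary_conj]

/-- The differential of the matrix exponential is metric-expanding:
`‖e^{-x/2} (D exp)_x(y) e^{-x/2}‖_F ≥ ‖y‖_F`, where `(D exp)_x(y)` is the derivative
of `t ↦ exp(x + t y)` at `t = 0`. -/
theorem dexp_expansive {n : ℕ} (x y D : Matrix (Fin n) (Fin n) ℂ)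
    (hx : x.IsHermitian) (hy : y.IsHermitian)
    (hD : HasDerivAt (fun t : ℝ => NormedSpace.exp (x + t • y)) D 0) :
    frob y ≤ frob (mexp (-((1/2 : ℝ) • x)) * D * mexp (-((1/2 : ℝ) • x))) :=
  dexp_expansive_general x y D hx hD
end
end

section
/- In the space of positive definite matrices with distance dist(p,q) = ‖log(p^{-1/2} q p^{-1/2})‖_F, a Cauchy sequence converges: if (p_n) is Cauchy for dist, then there is a positive definite p with dist(p_n, p) → 0. -/
open Matrix
open scoped ComplexOrder
noncomputable section

open Filter

/-!
Writing `m = p^{-1/2} q p^{-1/2}`, the bound `gdist p q ≤ r` says that the logarithms of the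
eigenvalues of `m` have ℓ²-norm at most `r`, while `e^{-r} p ≤ q ≤ e^r p`, i.e. `d_T(p, q) ≤ r` for
Thompson's part metric, says that they have ℓ^∞-norm at most `r`. The two distances are therefore comparable,
`d_T ≤ gdist ≤ √n d_T`. A `gdist`-Cauchy sequence is thus squeezed in Loewner order between
multiples `e^{∓r} p_N` of one of its terms, hence Cauchy for the C⋆-norm; its norm limit `q` is
squeezed between the same multiples because order intervals are closed, so `q` is positive
definite and `gdist p_k q ≤ √n r` eventually.
-/

open scoped MatrixOrder Matrix.Norms.L2Operator
open Topology

def ThompsonClose {A : Type*} [LE A] [SMul ℝ A] (r : ℝ) (a b : A) : Prop :=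
  Real.exp (-r) • a ≤ b ∧ b ≤ Real.exp r • a

lemma IsUnit.star_left_conjugate_le_conjugate_iff {R : Type*} [Ring R] [PartialOrder R]
    [StarRing R] [StarOrderedRing R] {u a b : R} (hu : IsUnit u) :
    star u * a * u ≤ star u * b * u ↔ a ≤ b := by
  rw [← sub_nonneg, ← sub_mul, ← mul_sub, hu.star_left_conjugate_nonneg_iff, sub_nonneg]

section CStarAlgebra

variable {A : Type*} [CStarAlgebra A] [PartialOrder A] [StarOrderedRing A]

lemma norm_sub_le_of_mem_Icc {a b c d : A} (hc : c ∈ Set.Icc a b) (hd : d ∈ Set.Icc a b) :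
    ‖c - d‖ ≤ 2 * ‖b - a‖ := by
  have key : ∀ x ∈ Set.Icc a b, ‖x - a‖ ≤ ‖b - a‖ := fun x hx =>
    CStarAlgebra.norm_le_norm_of_nonneg_of_le (sub_nonneg.2 hx.1) (sub_le_sub_right hx.2 a)
  calc ‖c - d‖ = ‖(c - a) - (d - a)‖ := by rw [sub_sub_sub_cancel_right]
    _ ≤ ‖c - a‖ + ‖d - a‖ := norm_sub_le _ _
    _ ≤ 2 * ‖b - a‖ := by linarith [key c hc, key d hd]

lemma ThompsonClose.norm_le {r : ℝ} {a b : A} (h : ThompsonClose r a b) (hb : 0 ≤ b) :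
    ‖b‖ ≤ Real.exp r * ‖a‖ := by
  simpa [norm_smul, abs_of_pos (Real.exp_pos r)] using
    CStarAlgebra.norm_le_norm_of_nonneg_of_le hb h.2

lemma cauchySeq_of_thompsonClose {p : ℕ → A} (hp : ∀ k, 0 ≤ p k)
    (h : ∀ r > 0, ∃ N, ∀ j ≥ N, ∀ k ≥ N, ThompsonClose r (p j) (p k)) : CauchySeq p := by
  obtain ⟨N₀, hN₀⟩ := h 1 one_pos
  set C := Real.exp 1 * ‖p N₀‖
  have hbound : ∀ j ≥ N₀, ‖p j‖ ≤ C := fun j hj => (hN₀ N₀ le_rfl j hj).norm_le (hp j)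
  rw [Metric.cauchySeq_iff]
  intro δ hδ
  have hlim : Tendsto (fun r => 2 * ((Real.exp r - Real.exp (-r)) * C)) (𝓝 0) (𝓝 0) := by
    have : Continuous (fun r => 2 * ((Real.exp r - Real.exp (-r)) * C)) := by fun_prop
    simpa using this.tendsto 0
  obtain ⟨r, hrδ, hr⟩ := ((hlim.eventually (gt_mem_nhds hδ)).filter_mono nhdsWithin_le_nhds
    |>.and (self_mem_nhdsWithin (s := Set.Ioi 0))).exists
  obtain ⟨N, hN⟩ := h r hr
  set M := max N N₀
  refine ⟨M, fun j hj k hk => ?_⟩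
  have hclose : ∀ i ≥ M, ThompsonClose r (p M) (p i) := fun i hi =>
    hN M (le_max_left _ _) i ((le_max_left _ _).trans hi)
  calc dist (p j) (p k) ≤ 2 * ‖Real.exp r • p M - Real.exp (-r) • p M‖ := by
        rw [dist_eq_norm]
        exact norm_sub_le_of_mem_Icc (hclose j hj) (hclose k hk)
    _ ≤ 2 * ((Real.exp r - Real.exp (-r)) * C) := by
        have hexp : 0 ≤ Real.exp r - Real.exp (-r) :=
          sub_nonneg.2 (Real.exp_le_exp.2 (by linarith))
        rw [← sub_smul, norm_smul, Real.norm_of_nonneg hexp]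
        gcongr
        exact hbound M (le_max_right _ _)
    _ < δ := hrδ

lemma thompsonClose_of_tendsto {r : ℝ} {a q : A} {p : ℕ → A} (hpq : Tendsto p atTop (𝓝 q))
    (h : ∀ᶠ k in atTop, ThompsonClose r a (p k)) : ThompsonClose r a q :=
  ⟨ge_of_tendsto hpq (h.mono fun _ => And.left), le_of_tendsto hpq (h.mono fun _ => And.right)⟩

end CStarAlgebra

section PosDefMatrix

variable {n : ℕ} {m p q : Matrix (Fin n) (Fin n) ℂ}

lemma mlog_eq_cfc (hm : m.IsHermitian) : mlog m = cfc Real.log m := by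
  rw [mlog, dif_pos hm, hm.cfc_eq, IsHermitian.cfc, Unitary.conjStarAlgAut_apply]
  rfl

lemma psqrt_eq_sqrt (hp : p.PosDef) : psqrt p = CFC.sqrt p := by
  have hcont : ∀ f : ℝ → ℝ, ContinuousOn f (spectrum ℝ p) :=
    p.finite_real_spectrum.continuousOn
  have hspec : ∀ x ∈ spectrum ℝ p, Real.exp ((1 / 2 : ℝ) * Real.log x) = √x := fun x hx => by
    rw [Real.sqrt_eq_rpow, Real.rpow_def_of_pos (hp.isStrictlyPositive.spectrum_pos hx), mul_comm]
  rw [psqrt, mexp, mlog_eq_cfc hp.isHermitian, ← cfc_const_mul _ _ _ (hcont _),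
    ← CFC.real_exp_eq_normedSpace_exp, ← cfc_comp' _ _ _ (hf := hcont _), cfc_congr hspec,
    CFC.sqrt_eq_real_sqrt _ hp.posSemidef.nonneg, cfcₙ_eq_cfc]

lemma Matrix.IsHermitian.trace_cfc {ι 𝕜 : Type*} [Fintype ι] [DecidableEq ι] [RCLike 𝕜]
    {a : Matrix ι ι 𝕜} (ha : a.IsHermitian) (f : ℝ → ℝ) :
    (cfc f a).trace = ∑ i, (f (ha.eigenvalues i) : 𝕜) := by
  rw [ha.cfc_eq, IsHermitian.cfc, Unitary.conjStarAlgAut_apply, trace_mul_cycle,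
    Unitary.coe_star_mul_self, one_mul, trace_diagonal]
  rfl

lemma frob_cfc (hm : m.IsHermitian) (f : ℝ → ℝ) :
    frob (cfc f m) = √(∑ i, f (hm.eigenvalues i) ^ 2) := by
  have hsa : (cfc f m)ᴴ = cfc f m := (cfc_predicate f m).star_eq
  rw [frob, hsa, ← cfc_mul f f m (m.finite_real_spectrum.continuousOn f)
    (m.finite_real_spectrum.continuousOn f), hm.trace_cfc]
  simp [sq]

lemma abs_le_frob_cfc (hm : m.IsHermitian) (f : ℝ → ℝ) {x : ℝ} (hx : x ∈ spectrum ℝ m) :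
    |f x| ≤ frob (cfc f m) := by
  rw [hm.spectrum_real_eq_range_eigenvalues] at hx
  obtain ⟨i, rfl⟩ := hx
  rw [frob_cfc hm, ← Real.sqrt_sq_eq_abs]
  exact Real.sqrt_le_sqrt (Finset.single_le_sum (fun j _ => sq_nonneg (f (hm.eigenvalues j)))
    (Finset.mem_univ i))

lemma frob_cfc_le (hm : m.IsHermitian) (f : ℝ → ℝ) {r : ℝ} (hr : 0 ≤ r)
    (h : ∀ x ∈ spectrum ℝ m, |f x| ≤ r) : frob (cfc f m) ≤ √n * r := by
  have hsum : ∑ i, f (hm.eigenvalues i) ^ 2 ≤ n * r ^ 2 := by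
    simpa using Finset.sum_le_sum fun i (_ : i ∈ Finset.univ) =>
      sq_le_sq' (abs_le.1 (h _ (hm.eigenvalues_mem_spectrum_real i))).1
        (abs_le.1 (h _ (hm.eigenvalues_mem_spectrum_real i))).2
  rw [frob_cfc hm, ← Real.sqrt_sq hr, ← Real.sqrt_mul (Nat.cast_nonneg n)]
  exact Real.sqrt_le_sqrt hsum

lemma isUnit_psqrt (p : Matrix (Fin n) (Fin n) ℂ) : IsUnit (psqrt p) :=
  Matrix.isUnit_exp _

lemma isSelfAdjoint_psqrt_inv (hp : p.PosDef) : IsSelfAdjoint (psqrt p)⁻¹ := by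
  rw [psqrt_eq_sqrt hp]
  exact (CFC.sqrt_nonneg p).isSelfAdjoint.isHermitian.inv

lemma psqrt_inv_conj_self (hp : p.PosDef) : (psqrt p)⁻¹ * p * (psqrt p)⁻¹ = 1 := by
  have hdet := (isUnit_iff_isUnit_det _).1 (isUnit_psqrt p)
  have hsq : psqrt p * psqrt p = p := by
    rw [psqrt_eq_sqrt hp]
    exact CFC.sqrt_mul_sqrt_self p hp.posSemidef.nonneg
  have h : (psqrt p)⁻¹ * (psqrt p * psqrt p) * (psqrt p)⁻¹ = 1 := by
    rw [← mul_assoc, nonsing_inv_mul _ hdet, one_mul, mul_nonsing_inv _ hdet]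
  rwa [hsq] at h

lemma psqrt_inv_conj_le_conj_iff (hp : p.PosDef) {a b : Matrix (Fin n) (Fin n) ℂ} :
    (psqrt p)⁻¹ * a * (psqrt p)⁻¹ ≤ (psqrt p)⁻¹ * b * (psqrt p)⁻¹ ↔ a ≤ b := by
  have h := (isUnit_nonsing_inv_iff.2 (isUnit_psqrt p)).star_left_conjugate_le_conjugate_iff
    (a := a) (b := b)
  rwa [(isSelfAdjoint_psqrt_inv hp).star_eq] at h

lemma posDef_psqrt_inv_conj (hp : p.PosDef) (hq : q.PosDef) :
    ((psqrt p)⁻¹ * q * (psqrt p)⁻¹).PosDef := by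
  have h := (isUnit_nonsing_inv_iff.2 (isUnit_psqrt p)).isStrictlyPositive_star_left_conjugate_iff
    |>.2 hq.isStrictlyPositive
  rw [(isSelfAdjoint_psqrt_inv hp).star_eq] at h
  exact isStrictlyPositive_iff_posDef.1 h

lemma thompsonClose_iff_abs_log_le (hp : p.PosDef) (hq : q.PosDef) {r : ℝ} :
    ThompsonClose r p q ↔
      ∀ x ∈ spectrum ℝ ((psqrt p)⁻¹ * q * (psqrt p)⁻¹), |Real.log x| ≤ r := by
  have hconj : ∀ c : ℝ, (psqrt p)⁻¹ * (c • p) * (psqrt p)⁻¹ = algebraMap ℝ _ c := fun c => by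
    rw [mul_smul_comm, smul_mul_assoc, psqrt_inv_conj_self hp, Algebra.algebraMap_eq_smul_one]
  have hm := posDef_psqrt_inv_conj hp hq
  rw [ThompsonClose, ← psqrt_inv_conj_le_conj_iff hp, ← psqrt_inv_conj_le_conj_iff hp (b := _ • p),
    hconj, hconj, algebraMap_le_iff_le_spectrum hm.isHermitian.isSelfAdjoint,
    le_algebraMap_iff_spectrum_le hm.isHermitian.isSelfAdjoint, ← forall₂_and]
  refine forall₂_congr fun x hx => ?_
  have hx₀ := hm.isStrictlyPositive.spectrum_pos hx
  rw [abs_le, ← Real.le_log_iff_exp_le hx₀, ← Real.log_le_iff_le_exp hx₀]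

lemma gdist_nonneg (p q : Matrix (Fin n) (Fin n) ℂ) : 0 ≤ gdist p q :=
  Real.sqrt_nonneg _

lemma thompsonClose_of_gdist_lt (hp : p.PosDef) (hq : q.PosDef) {r : ℝ} (h : gdist p q < r) :
    ThompsonClose r p q := by
  have hm := (posDef_psqrt_inv_conj hp hq).isHermitian
  rw [gdist, mlog_eq_cfc hm] at h
  exact (thompsonClose_iff_abs_log_le hp hq).2 fun x hx => (abs_le_frob_cfc hm _ hx).trans h.le

lemma gdist_le_of_thompsonClose (hp : p.PosDef) (hq : q.PosDef) {r : ℝ} (hr : 0 ≤ r)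
    (h : ThompsonClose r p q) : gdist p q ≤ √n * r := by
  have hm := (posDef_psqrt_inv_conj hp hq).isHermitian
  rw [gdist, mlog_eq_cfc hm]
  exact frob_cfc_le hm _ hr ((thompsonClose_iff_abs_log_le hp hq).1 h)

lemma Matrix.PosDef.of_thompsonClose (hp : p.PosDef) {r : ℝ} (h : ThompsonClose r p q) :
    q.PosDef :=
  isStrictlyPositive_iff_posDef.1 <|
    ((hp.smul (Real.exp_pos (-r))).isStrictlyPositive).of_le h.1

end PosDefMatrix

/-- The space of positive definite matrices with the geodesic distance
`dist(p,q) = ‖log(p^{-1/2} q p^{-1/2})‖_F` is complete: every Cauchy sequence converges. -/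
theorem posDef_gdist_complete {n : ℕ} (p : ℕ → Matrix (Fin n) (Fin n) ℂ)
    (hp : ∀ k, (p k).PosDef)
    (hcauchy : ∀ ε > (0 : ℝ), ∃ N : ℕ, ∀ j ≥ N, ∀ k ≥ N, gdist (p j) (p k) < ε) :
    ∃ q : Matrix (Fin n) (Fin n) ℂ, q.PosDef ∧
      Tendsto (fun k => gdist (p k) q) atTop (nhds 0) := by
  have hT : ∀ r > 0, ∃ N, ∀ j ≥ N, ∀ k ≥ N, ThompsonClose r (p j) (p k) := fun r hr =>
    (hcauchy r hr).imp fun N hN j hj k hk => thompsonClose_of_gdist_lt (hp j) (hp k) (hN j hj k hk)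
  obtain ⟨q, hpq⟩ := cauchySeq_tendsto_of_complete
    (cauchySeq_of_thompsonClose (fun k => (hp k).posSemidef.nonneg) hT)
  have hTq : ∀ r > 0, ∃ N, ∀ j ≥ N, ThompsonClose r (p j) q := fun r hr =>
    (hT r hr).imp fun N hN j hj => thompsonClose_of_tendsto hpq (eventually_atTop.2 ⟨N, hN j hj⟩)
  obtain ⟨N₁, hN₁⟩ := hTq 1 one_pos
  have hq : q.PosDef := (hp N₁).of_thompsonClose (hN₁ N₁ le_rfl)
  refine ⟨q, hq, Metric.tendsto_atTop.2 fun δ hδ => ?_⟩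
  obtain ⟨r, hr, hrδ⟩ := exists_pos_mul_lt hδ √n
  obtain ⟨N, hN⟩ := hTq r hr
  refine ⟨N, fun k hk => ?_⟩
  rw [Real.dist_0_eq_abs, abs_of_nonneg (gdist_nonneg _ _)]
  exact (gdist_le_of_thompsonClose (hp k) hq hr.le (hN k hk)).trans_lt hrδ
end
end

section
/- Geodesic formula: for positive definite matrices p, q, the curve γ(t) = p^{1/2} (p^{-1/2} q p^{-1/2})^t p^{1/2} satisfies γ(0) = p, γ(1) = q, and its values are positive definite for all real t; moreover dist(γ(s), γ(t)) = |t − s| · dist(p,q). -/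
open Matrix
open scoped ComplexOrder
noncomputable section

/-!
Conjugating by `P = p^{1/2}` turns the geodesic into the one-parameter group
`t ↦ exp (t log m)` with `m = p^{-1/2} q p^{-1/2}`. The distance `gdist a b` is the
`ℓ²`-norm of the logarithms of the eigenvalues of `a⁻¹ b`, hence depends only on the
characteristic polynomial of `a⁻¹ b`. As `γ(s)⁻¹ γ(t)` is similar to `exp ((t - s) log m)`,
whose eigenvalues are those of `m` raised to the power `t - s`, all these logarithms scale
by `t - s`.
-/

open Polynomial

variable {n : ℕ}

section UnitaryConj

variable (U : unitaryGroup (Fin n) ℂ)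

lemma mexp_unitary_conj_diagonal (c : Fin n → ℂ) :
    mexp ((U : Matrix (Fin n) (Fin n) ℂ) * diagonal c * star (U : Matrix (Fin n) (Fin n) ℂ)) =
      U * diagonal (fun i => Complex.exp (c i)) * star (U : Matrix (Fin n) (Fin n) ℂ) := by
  have hU : IsUnit (U : Matrix (Fin n) (Fin n) ℂ) := (Unitary.toUnits U).isUnit
  rw [mexp, ← inv_eq_left_inv (Unitary.coe_star_mul_self U), Matrix.exp_conj _ _ hU,
    Matrix.exp_diagonal, Pi.exp_def]
  simp only [Complex.exp_eq_exp_ℂ]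

lemma charpoly_unitary_conj_diagonal (c : Fin n → ℂ) :
    ((U : Matrix (Fin n) (Fin n) ℂ) * diagonal c *
      star (U : Matrix (Fin n) (Fin n) ℂ)).charpoly = ∏ i, (X - C (c i)) := by
  rw [charpoly_mul_comm, ← mul_assoc, Unitary.coe_star_mul_self, one_mul, charpoly_diagonal]

lemma posDef_unitary_conj_diagonal {c : Fin n → ℝ} (hc : ∀ i, 0 < c i) :
    ((U : Matrix (Fin n) (Fin n) ℂ) * diagonal (fun i => (c i : ℂ)) *
      star (U : Matrix (Fin n) (Fin n) ℂ)).PosDef :=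
  ((Unitary.toUnits U).isUnit.posDef_star_right_conjugate_iff).mpr
    (posDef_diagonal_iff.mpr fun i => by exact_mod_cast hc i)

lemma frob_unitary_conj_diagonal (c : Fin n → ℝ) :
    frob ((U : Matrix (Fin n) (Fin n) ℂ) * diagonal (fun i => (c i : ℂ)) *
      star (U : Matrix (Fin n) (Fin n) ℂ)) = √(∑ i, c i ^ 2) := by
  have hUU : (U : Matrix (Fin n) (Fin n) ℂ)ᴴ * U = 1 := Unitary.coe_star_mul_self U
  have hc : star (fun i => (c i : ℂ)) = fun i => (c i : ℂ) := by ext; simp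
  simp only [frob, star_eq_conjTranspose, conjTranspose_mul, conjTranspose_conjTranspose,
    diagonal_conjTranspose, hc, mul_assoc]
  have hcancel (X : Matrix (Fin n) (Fin n) ℂ) :
      (U : Matrix (Fin n) (Fin n) ℂ)ᴴ * (U * X) = X := by
    rw [← mul_assoc, hUU, one_mul]
  simp only [hcancel, ← mul_assoc]
  rw [trace_mul_comm]
  simp only [← mul_assoc, hUU, one_mul, diagonal_mul_diagonal, trace_diagonal]
  simp [sq]

end UnitaryConj

lemma mexp_add_smul (M : Matrix (Fin n) (Fin n) ℂ) (s t : ℝ) :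
    mexp ((s + t) • M) = mexp (s • M) * mexp (t • M) := by
  rw [mexp, add_smul]
  exact Matrix.exp_add_of_commute _ _ (((Commute.refl M).smul_left s).smul_right t)

lemma mexp_smul_inv_mul (M : Matrix (Fin n) (Fin n) ℂ) (s t : ℝ) :
    (mexp (s • M))⁻¹ * mexp (t • M) = mexp ((t - s) • M) := by
  rw [mexp, ← Matrix.exp_neg, ← neg_smul, ← mexp, sub_eq_neg_add, mexp_add_smul]

section Spectral

variable {A : Matrix (Fin n) (Fin n) ℂ}

lemma mlog_of_isHermitian (hA : A.IsHermitian) :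
    mlog A = (hA.eigenvectorUnitary : Matrix (Fin n) (Fin n) ℂ) *
      diagonal (fun i => (Real.log (hA.eigenvalues i) : ℂ)) *
      star (hA.eigenvectorUnitary : Matrix (Fin n) (Fin n) ℂ) :=
  dif_pos hA

lemma mexp_smul_mlog (hA : A.IsHermitian) (t : ℝ) :
    mexp (t • mlog A) = (hA.eigenvectorUnitary : Matrix (Fin n) (Fin n) ℂ) *
      diagonal (fun i => (Real.exp (t * Real.log (hA.eigenvalues i)) : ℂ)) *
      star (hA.eigenvectorUnitary : Matrix (Fin n) (Fin n) ℂ) := by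
  rw [mlog_of_isHermitian hA, ← smul_mul_assoc, ← mul_smul_comm, ← diagonal_smul,
    mexp_unitary_conj_diagonal]
  congr 3
  ext i
  simp [Complex.real_smul]

lemma posDef_mexp_smul_mlog (hA : A.IsHermitian) (t : ℝ) : (mexp (t • mlog A)).PosDef := by
  rw [mexp_smul_mlog hA]
  exact posDef_unitary_conj_diagonal _ fun i => Real.exp_pos _

lemma mexp_mlog (hA : A.PosDef) : mexp (mlog A) = A := by
  conv_rhs => rw [hA.isHermitian.spectral_theorem, Unitary.conjStarAlgAut_apply]
  rw [← one_smul ℝ (mlog A), mexp_smul_mlog hA.isHermitian]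
  congr 3
  ext i
  simp [Real.exp_log (hA.eigenvalues_pos i)]

lemma frob_mlog_of_isHermitian (hA : A.IsHermitian) :
    frob (mlog A) = √(∑ i, Real.log (hA.eigenvalues i) ^ 2) := by
  rw [mlog_of_isHermitian hA, frob_unitary_conj_diagonal]

lemma posDef_psqrt (hA : A.IsHermitian) : (psqrt A).PosDef :=
  posDef_mexp_smul_mlog hA _

lemma psqrt_mul_self (hA : A.PosDef) : psqrt A * psqrt A = A := by
  rw [psqrt, ← mexp_add_smul, add_halves, one_smul, mexp_mlog hA]

lemma charpoly_mexp_smul_mlog (hA : A.IsHermitian) (t : ℝ) :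
    (mexp (t • mlog A)).charpoly =
      ∏ i, (X - C ((Real.exp (t * Real.log (hA.eigenvalues i)) : ℝ) : ℂ)) := by
  rw [mexp_smul_mlog hA, charpoly_unitary_conj_diagonal]

lemma frob_mlog_of_charpoly_eq (hA : A.IsHermitian) {c : Fin n → ℝ}
    (h : A.charpoly = ∏ i, (X - C (c i : ℂ))) :
    frob (mlog A) = √(∑ i, Real.log (c i) ^ 2) := by
  have hroots : Finset.univ.val.map (RCLike.ofReal ∘ hA.eigenvalues) =
      Finset.univ.val.map (fun i => (c i : ℂ)) := by
    rw [← hA.roots_charpoly_eq_eigenvalues, h, roots_prod]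
    · simp
    · simp [Finset.prod_ne_zero_iff, X_sub_C_ne_zero]
  have hsum := congrArg (fun s => (s.map fun z : ℂ => Real.log z.re ^ 2).sum) hroots
  rw [frob_mlog_of_isHermitian hA]
  simpa [Multiset.map_map, Function.comp_def, Finset.sum_eq_multiset_sum] using
    congrArg Real.sqrt hsum

end Spectral

lemma gdist_of_charpoly_inv_mul_eq {a b : Matrix (Fin n) (Fin n) ℂ} (ha : a.PosDef)
    (hb : b.IsHermitian) {c : Fin n → ℝ}
    (h : (a⁻¹ * b).charpoly = ∏ i, (X - C (c i : ℂ))) :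
    gdist a b = √(∑ i, Real.log (c i) ^ 2) := by
  have hS : (psqrt a).IsHermitian := (posDef_psqrt ha.isHermitian).isHermitian
  have hY : ((psqrt a)⁻¹ * b * (psqrt a)⁻¹).IsHermitian := by
    simpa [hS.inv.eq] using isHermitian_conjTranspose_mul_mul (psqrt a)⁻¹ hb
  refine frob_mlog_of_charpoly_eq hY ?_
  rw [charpoly_mul_comm, ← mul_assoc, ← Matrix.mul_inv_rev, psqrt_mul_self ha, h]

def geodesic (p q : Matrix (Fin n) (Fin n) ℂ) (t : ℝ) : Matrix (Fin n) (Fin n) ℂ :=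
  psqrt p * mexp (t • mlog ((psqrt p)⁻¹ * q * (psqrt p)⁻¹)) * psqrt p

section Geodesic

variable {p q : Matrix (Fin n) (Fin n) ℂ}

lemma isHermitian_inv_psqrt_mul_mul (hp : p.IsHermitian) (hq : q.IsHermitian) :
    ((psqrt p)⁻¹ * q * (psqrt p)⁻¹).IsHermitian := by
  simpa [(posDef_psqrt hp).isHermitian.inv.eq] using
    isHermitian_conjTranspose_mul_mul (psqrt p)⁻¹ hq

lemma geodesic_zero (hp : p.PosDef) : geodesic p q 0 = p := by
  rw [geodesic, zero_smul, mexp, NormedSpace.exp_zero, mul_one, psqrt_mul_self hp]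

lemma geodesic_one (hp : p.PosDef) (hq : q.PosDef) : geodesic p q 1 = q := by
  have hP := posDef_psqrt hp.isHermitian
  have hm : ((psqrt p)⁻¹ * q * (psqrt p)⁻¹).PosDef := by
    simpa [star_eq_conjTranspose, hP.inv.isHermitian.eq] using
      hP.inv.isUnit.posDef_star_right_conjugate_iff.mpr hq
  have hdet := (isUnit_iff_isUnit_det _).mp hP.isUnit
  rw [geodesic, one_smul, mexp_mlog hm]
  simp only [← mul_assoc, mul_nonsing_inv _ hdet, one_mul]
  simp only [mul_assoc, nonsing_inv_mul _ hdet, mul_one]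

lemma posDef_geodesic (hp : p.IsHermitian) (hq : q.IsHermitian) (t : ℝ) :
    (geodesic p q t).PosDef := by
  have hP := posDef_psqrt hp
  rw [geodesic]
  simpa [star_eq_conjTranspose, hP.isHermitian.eq] using
    hP.isUnit.posDef_star_right_conjugate_iff.mpr
      (posDef_mexp_smul_mlog (isHermitian_inv_psqrt_mul_mul hp hq) t)

lemma charpoly_geodesic_inv_mul (hp : p.IsHermitian) (s t : ℝ) :
    ((geodesic p q s)⁻¹ * geodesic p q t).charpoly =
      (mexp ((t - s) • mlog ((psqrt p)⁻¹ * q * (psqrt p)⁻¹))).charpoly := by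
  have hdet := (isUnit_iff_isUnit_det _).mp (posDef_psqrt hp).isUnit
  rw [geodesic, geodesic, Matrix.mul_inv_rev, Matrix.mul_inv_rev, ← mexp_smul_inv_mul]
  have hconj (X Y : Matrix (Fin n) (Fin n) ℂ) :
      (psqrt p)⁻¹ * (X * (psqrt p)⁻¹) * (psqrt p * Y * psqrt p) =
        (psqrt p)⁻¹ * (X * Y) * psqrt p := by
    simp only [mul_assoc, nonsing_inv_mul_cancel_left _ _ hdet]
  rw [hconj, charpoly_mul_comm, ← mul_assoc, mul_nonsing_inv _ hdet, one_mul]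

lemma gdist_geodesic (hp : p.IsHermitian) (hq : q.IsHermitian) (s t : ℝ) :
    gdist (geodesic p q s) (geodesic p q t) = |t - s| * gdist p q := by
  have hm := isHermitian_inv_psqrt_mul_mul hp hq
  have hcharpoly := (charpoly_geodesic_inv_mul hp s t).trans (charpoly_mexp_smul_mlog hm (t - s))
  rw [gdist_of_charpoly_inv_mul_eq (posDef_geodesic hp hq s)
    (posDef_geodesic hp hq t).isHermitian hcharpoly, gdist, frob_mlog_of_isHermitian hm]
  simp only [Real.log_exp, mul_pow, ← Finset.mul_sum]
  rw [Real.sqrt_mul (sq_nonneg _), Real.sqrt_sq_eq_abs]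

end Geodesic

/-- The geodesic `γ(t) = p^{1/2} (p^{-1/2} q p^{-1/2})^t p^{1/2}` joins `p` to `q`,
stays positive definite, and satisfies `dist(γ(s), γ(t)) = |t - s| · dist(p, q)`. -/
theorem geodesic_formula {n : ℕ} (p q : Matrix (Fin n) (Fin n) ℂ)
    (hp : p.PosDef) (hq : q.PosDef) :
    (fun t : ℝ => psqrt p * mexp (t • mlog ((psqrt p)⁻¹ * q * (psqrt p)⁻¹)) * psqrt p) 0 = p ∧
    (fun t : ℝ => psqrt p * mexp (t • mlog ((psqrt p)⁻¹ * q * (psqrt p)⁻¹)) * psqrt p) 1 = q ∧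
    (∀ t : ℝ,
      (psqrt p * mexp (t • mlog ((psqrt p)⁻¹ * q * (psqrt p)⁻¹)) * psqrt p).PosDef) ∧
    (∀ s t : ℝ,
      gdist (psqrt p * mexp (s • mlog ((psqrt p)⁻¹ * q * (psqrt p)⁻¹)) * psqrt p)
        (psqrt p * mexp (t • mlog ((psqrt p)⁻¹ * q * (psqrt p)⁻¹)) * psqrt p) =
      |t - s| * gdist p q) :=
  ⟨geodesic_zero hp, geodesic_one hp hq, posDef_geodesic hp.isHermitian hq.isHermitian,
    gdist_geodesic hp.isHermitian hq.isHermitian⟩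
end
end
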